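/- arXiv:1207.0063 — 7 statements merged into one kernel-verified Lean document; each statement's English description precedes it below -/
import Mathlib

section
/- An odd composite squarefree number n = p₁·p₂·⋯·p_t (with distinct odd primes p_i, each coprime to a) is a strong pseudoprime to base a if and only if n is a pseudoprime to base a (i.e., a^(n-1) ≡ 1 mod n) and the 2-adic valuations of the multiplicative orders of a modulo p₁, ..., p_t are all equal. -/
def StrongPsp (a n : ℕ) : Prop :=
  Odd n ∧ 1 < n ∧ ¬ n.Prime ∧
    ∃ s d : ℕ, Odd d ∧ n - 1 = 2 ^ s * d ∧
      ((a : ZMod n) ^ d = 1 ∨ ∃ k < s, (a : ZMod n) ^ (2 ^ k * d) = -1)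

/-!
By the Chinese remainder theorem a congruence modulo `n = ∏ pᵢ` holds iff it holds modulo every
`pᵢ`. Fix `n - 1 = 2 ^ s * d` with `d` odd and let `vᵢ` be the 2-adic valuation of the order of `a`
modulo `pᵢ`. As soon as `a ^ (2 ^ s * d) ≡ 1 (mod pᵢ)`, we have `a ^ (2 ^ k * d) ≡ 1` iff
`vᵢ ≤ k`, and, since `±1` are the only square roots of `1` modulo a prime, `a ^ (2 ^ k * d) ≡ -1`
iff `vᵢ = k + 1`. So the strong condition says precisely that `a ^ (n - 1) ≡ 1` and that all `vᵢ`
are `0` or all are the same `k + 1 ≤ s`.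
-/

open Function

theorem padicValNat_two_pow_mul_of_odd {k m : ℕ} (hm : Odd m) :
    padicValNat 2 (2 ^ k * m) = k := by
  rw [padicValNat.mul (by positivity) hm.pos.ne', padicValNat.prime_pow,
    padicValNat.eq_zero_of_not_dvd hm.not_two_dvd_nat, add_zero]

/-- The odd part of `m` divides `d`, so only the power of two in `m` matters. -/
theorem dvd_two_pow_mul_odd_iff {m j d : ℕ} (hd : Odd d) (hm : m ∣ 2 ^ j * d) (i : ℕ) :
    m ∣ 2 ^ i * d ↔ padicValNat 2 m ≤ i := by
  obtain ⟨v, c, hc, rfl⟩ := Nat.exists_eq_two_pow_mul_odd (ne_zero_of_dvd_ne_zero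
    (mul_ne_zero (by positivity) hd.pos.ne') hm)
  rw [padicValNat_two_pow_mul_of_odd hc]
  constructor
  · intro h
    have h2 : 2 ^ v ∣ 2 ^ i :=
      ((Nat.coprime_two_left.2 hd).pow_left v).dvd_of_dvd_mul_right (dvd_of_mul_right_dvd h)
    exact (Nat.pow_dvd_pow_iff_le_right one_lt_two).1 h2
  · intro h
    have hcd : c ∣ d :=
      ((Nat.coprime_two_right.2 hc).pow_right j).dvd_of_dvd_mul_left (dvd_of_mul_left_dvd hm)
    exact mul_dvd_mul (pow_dvd_pow 2 h) hcd

theorem pow_two_pow_mul_odd_eq_one_iff {M : Type*} [Monoid M] {x : M} {j d : ℕ} (hd : Odd d)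
    (hx : x ^ (2 ^ j * d) = 1) (i : ℕ) :
    x ^ (2 ^ i * d) = 1 ↔ padicValNat 2 (orderOf x) ≤ i := by
  rw [← orderOf_dvd_iff_pow_eq_one] at hx ⊢
  exact dvd_two_pow_mul_odd_iff hd hx i

theorem pow_two_pow_mul_odd_eq_neg_one_iff {R : Type*} [Ring R] [NoZeroDivisors R]
    (hR : (-1 : R) ≠ 1) {x : R} {j d : ℕ} (hd : Odd d) (hx : x ^ (2 ^ j * d) = 1) (k : ℕ) :
    x ^ (2 ^ k * d) = -1 ↔ padicValNat 2 (orderOf x) = k + 1 := by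
  have hsq : x ^ (2 ^ (k + 1) * d) = x ^ (2 ^ k * d) * x ^ (2 ^ k * d) := by
    rw [← pow_add, pow_succ]; ring_nf
  have hone := pow_two_pow_mul_odd_eq_one_iff hd hx
  constructor
  · intro h
    have hne : ¬ x ^ (2 ^ k * d) = 1 := h ▸ hR
    have hsq_one : x ^ (2 ^ (k + 1) * d) = 1 := by rw [hsq, h, neg_one_mul, neg_neg]
    rw [hone] at hne hsq_one
    omega
  · intro h
    have hsq_one := (hone (k + 1)).2 h.le
    rw [hsq, mul_self_eq_one_iff] at hsq_one
    exact hsq_one.resolve_left (by rw [hone]; omega)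

theorem forall_pow_eq_one_or_exists_forall_pow_eq_neg_one_iff {ι : Type*} {R : ι → Type*}
    [∀ i, Ring (R i)] [∀ i, NoZeroDivisors (R i)] (hR : ∀ i, (-1 : R i) ≠ 1) (x : ∀ i, R i)
    (s : ℕ) {d : ℕ} (hd : Odd d) :
    ((∀ i, x i ^ d = 1) ∨ ∃ k < s, ∀ i, x i ^ (2 ^ k * d) = -1) ↔
      (∀ i, x i ^ (2 ^ s * d) = 1) ∧
        ∀ i j, padicValNat 2 (orderOf (x i)) = padicValNat 2 (orderOf (x j)) := by
  constructor
  · rintro (hone | ⟨k, hk, hneg⟩)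
    · have hone' : ∀ i, x i ^ (2 ^ 0 * d) = 1 := by simpa using hone
      have hval : ∀ i, padicValNat 2 (orderOf (x i)) = 0 := fun i =>
        Nat.le_zero.1 ((pow_two_pow_mul_odd_eq_one_iff hd (hone' i) 0).1 (hone' i))
      exact ⟨fun i => (pow_two_pow_mul_odd_eq_one_iff hd (hone' i) s).2 (by simp [hval]),
        fun i j => by rw [hval, hval]⟩
    · have hone : ∀ i, x i ^ (2 ^ (k + 1) * d) = 1 := fun i => by
        rw [pow_succ, mul_right_comm, pow_mul, hneg i, neg_one_sq]
      have hval : ∀ i, padicValNat 2 (orderOf (x i)) = k + 1 := fun i =>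
        (pow_two_pow_mul_odd_eq_neg_one_iff (hR i) hd (hone i) k).1 (hneg i)
      exact ⟨fun i => (pow_two_pow_mul_odd_eq_one_iff hd (hone i) s).2 (hval i ▸ hk),
        fun i j => by rw [hval, hval]⟩
  · rintro ⟨hone, hval⟩
    by_cases h0 : ∀ i, padicValNat 2 (orderOf (x i)) = 0
    · exact Or.inl fun i => by
        simpa using (pow_two_pow_mul_odd_eq_one_iff hd (hone i) 0).2 (h0 i).le
    push Not at h0
    obtain ⟨i₀, hi₀⟩ := h0
    obtain ⟨k, hk⟩ := Nat.exists_eq_succ_of_ne_zero hi₀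
    have hks := (pow_two_pow_mul_odd_eq_one_iff hd (hone i₀) s).1 (hone i₀)
    exact Or.inr ⟨k, by omega, fun i =>
      (pow_two_pow_mul_odd_eq_neg_one_iff (hR i) hd (hone i) k).2 ((hval i i₀).trans hk)⟩

theorem ZMod.eq_iff_forall_castHom_eq {ι : Type*} [Fintype ι] {p : ι → ℕ}
    (hp : Pairwise (Nat.Coprime on p)) (x y : ZMod (∏ i, p i)) :
    x = y ↔ ∀ i, ZMod.castHom (Finset.dvd_prod_of_mem p (Finset.mem_univ i)) (ZMod (p i)) x =
      ZMod.castHom (Finset.dvd_prod_of_mem p (Finset.mem_univ i)) (ZMod (p i)) y := by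
  rw [← (ZMod.prodEquivPi p hp).injective.eq_iff, funext_iff]
  simp only [ZMod.prodEquivPi_apply]

theorem stmt0_general (t : ℕ) (p : Fin t → ℕ) (a n : ℕ)
    (hp : ∀ i, (p i).Prime) (hodd : ∀ i, Odd (p i))
    (hinj : Function.Injective p)
    (hn : n = ∏ i, p i) (hodd' : Odd n) (hcomp : ¬ n.Prime) (h1 : 1 < n) :
    StrongPsp a n ↔
      (a ^ (n - 1) ≡ 1 [MOD n] ∧ ∀ i j,
        padicValNat 2 (orderOf (a : ZMod (p i))) =
          padicValNat 2 (orderOf (a : ZMod (p j)))) := by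
  have : ∀ i, Fact (p i).Prime := fun i => ⟨hp i⟩
  have hR : ∀ i, (-1 : ZMod (p i)) ≠ 1 := fun i =>
    haveI := Fact.mk ((hp i).two_le.lt_of_ne ((hodd i).ne_two_of_dvd_nat dvd_rfl).symm)
    ZMod.neg_one_ne_one
  have hcop : Pairwise (Nat.Coprime on p) := fun i j hij =>
    (Nat.coprime_primes (hp i) (hp j)).2 (hinj.ne hij)
  have key := forall_pow_eq_one_or_exists_forall_pow_eq_neg_one_iff hR (fun i => (a : ZMod (p i)))
  rw [StrongPsp, ← ZMod.natCast_eq_natCast_iff]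
  subst hn
  simp only [hodd', h1, hcomp, not_false_eq_true, true_and, Nat.cast_pow, Nat.cast_one,
    ZMod.eq_iff_forall_castHom_eq hcop, map_pow, map_natCast, map_one, map_neg]
  constructor
  · rintro ⟨s, d, hd, hsd, hstrong⟩
    rw [hsd]
    exact (key s hd).1 hstrong
  · intro h
    obtain ⟨s, d, hd, hsd⟩ := Nat.exists_eq_two_pow_mul_odd (n := ∏ i, p i - 1) (by omega)
    rw [hsd] at h
    exact ⟨s, d, hd, hsd, (key s hd).2 h⟩

theorem stmt0 (t : ℕ) (p : Fin t → ℕ) (a n : ℕ)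
    (hp : ∀ i, (p i).Prime) (hodd : ∀ i, Odd (p i))
    (hinj : Function.Injective p)
    (hn : n = ∏ i, p i) (hodd' : Odd n) (hcomp : ¬ n.Prime) (h1 : 1 < n)
    (hcop : ∀ i, Nat.Coprime a (p i)) :
    StrongPsp a n ↔
      (a ^ (n - 1) ≡ 1 [MOD n] ∧ ∀ i j,
        padicValNat 2 (orderOf (a : ZMod (p i))) =
          padicValNat 2 (orderOf (a : ZMod (p j)))) :=
  stmt0_general t p a n hp hodd hinj hn hodd' hcomp h1
end

section
/- Let p and q be odd primes and a an integer coprime to pq. If the 2-adic valuation of p−1 equals the 2-adic valuation of q−1, and the 2-adic valuation of the order of a modulo p equals the 2-adic valuation of the order of a modulo q, then the Legendre symbols (a/p) and (a/q) are equal. -/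
/-!
For a nonzero `a` in a finite field `F` of odd order, Euler's criterion says that `a` is a square
iff `a ^ ((#F - 1) / 2) = 1`, i.e. iff `orderOf a ∣ (#F - 1) / 2`. Since `orderOf a ∣ #F - 1`, this
happens iff the 2-part of `orderOf a` is strictly smaller than that of `#F - 1`. Hence the Legendre
symbol `(a/p)` is determined by the two 2-adic valuations in the hypotheses.
-/

theorem Nat.dvd_div_iff_padicValNat_lt {r d n : ℕ} [Fact r.Prime] (hn : n ≠ 0) (hdn : d ∣ n)
    (hrn : r ∣ n) : d ∣ n / r ↔ padicValNat r d < padicValNat r n := by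
  obtain ⟨m, rfl⟩ := hdn
  have hd : d ≠ 0 := left_ne_zero_of_mul hn
  have hm : m ≠ 0 := right_ne_zero_of_mul hn
  rw [Nat.dvd_div_iff_mul_dvd hrn, mul_comm r, Nat.mul_dvd_mul_iff_left (Nat.pos_of_ne_zero hd),
    dvd_iff_padicValNat_ne_zero hm, padicValNat.mul hd hm]
  omega

theorem FiniteField.isSquare_iff_padicValNat_orderOf_lt {F : Type*} [Field F] [Fintype F]
    (hF : ringChar F ≠ 2) {a : F} (ha : a ≠ 0) :
    IsSquare a ↔ padicValNat 2 (orderOf a) < padicValNat 2 (Fintype.card F - 1) := by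
  have hodd : Fintype.card F % 2 = 1 := FiniteField.odd_card_of_char_ne_two hF
  have hcard : Fintype.card F - 1 ≠ 0 := by have := Fintype.one_lt_card (α := F); omega
  have hhalf : Fintype.card F / 2 = (Fintype.card F - 1) / 2 := by omega
  rw [FiniteField.isSquare_iff hF ha, hhalf, ← orderOf_dvd_iff_pow_eq_one]
  exact Nat.dvd_div_iff_padicValNat_lt hcard
    (orderOf_dvd_of_pow_eq_one (FiniteField.pow_card_sub_one_eq_one a ha)) (by omega)

theorem legendreSym_eq_ite_padicValNat_orderOf_lt (p : ℕ) [Fact p.Prime] (hp : p ≠ 2) {a : ℤ}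
    (ha : (a : ZMod p) ≠ 0) :
    legendreSym p a =
      if padicValNat 2 (orderOf (a : ZMod p)) < padicValNat 2 (p - 1) then 1 else -1 := by
  have hchar : ringChar (ZMod p) ≠ 2 := by rwa [ZMod.ringChar_zmod_n]
  have hsq := FiniteField.isSquare_iff_padicValNat_orderOf_lt hchar ha
  rw [ZMod.card] at hsq
  split_ifs with h
  · exact (legendreSym.eq_one_iff p ha).mpr (hsq.mpr h)
  · exact (legendreSym.eq_neg_one_iff p).mpr (mt hsq.mp h)

theorem ZMod.intCast_ne_zero_of_isCoprime {p : ℕ} (hp : p ≠ 1) {a m : ℤ} (hpm : (p : ℤ) ∣ m)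
    (hcop : IsCoprime a m) : (a : ZMod p) ≠ 0 := by
  rw [Ne, ZMod.intCast_zmod_eq_zero_iff_dvd]
  intro hpa
  rcases Int.isUnit_iff.mp (hcop.isUnit_of_dvd' hpa hpm) with h | h <;> omega

theorem stmt1 (p q : ℕ) (a : ℤ) (hp : p.Prime) (hq : q.Prime)
    (hpo : Odd p) (hqo : Odd q) (hcop : IsCoprime a ((p : ℤ) * q))
    (hval : padicValNat 2 (p - 1) = padicValNat 2 (q - 1))
    (hord : padicValNat 2 (orderOf (a : ZMod p)) =
      padicValNat 2 (orderOf (a : ZMod q))) :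
    jacobiSym a p = jacobiSym a q := by
  have : Fact p.Prime := ⟨hp⟩
  have : Fact q.Prime := ⟨hq⟩
  have hp2 : p ≠ 2 := by rintro rfl; exact absurd hpo (by decide)
  have hq2 : q ≠ 2 := by rintro rfl; exact absurd hqo (by decide)
  have hap : (a : ZMod p) ≠ 0 :=
    ZMod.intCast_ne_zero_of_isCoprime hp.one_lt.ne' (dvd_mul_right _ _) hcop
  have haq : (a : ZMod q) ≠ 0 :=
    ZMod.intCast_ne_zero_of_isCoprime hq.one_lt.ne' (dvd_mul_left _ _) hcop
  rw [← jacobiSym.legendreSym.to_jacobiSym, ← jacobiSym.legendreSym.to_jacobiSym,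
    legendreSym_eq_ite_padicValNat_orderOf_lt p hp2 hap,
    legendreSym_eq_ite_padicValNat_orderOf_lt q hq2 haq, hval, hord]
end

section
/- If n is an odd composite number that is a pseudoprime to base a (a^(n-1) ≡ 1 mod n) and p² divides n for some prime p with gcd(a, p) = 1, then a^(p−1) ≡ 1 (mod p²), i.e., p is a Wieferich-like prime for base a. -/
/-! The multiplicative order of `a` modulo `p²` divides both `n - 1` (pseudoprimality) and
`φ(p²) = p (p - 1)` (Euler). As `p ∣ n`, the prime `p` does not divide `n - 1`, so the order
already divides `p - 1`. -/

theorem pow_eq_one_of_pow_mul_eq_one_of_coprime {M : Type*} [Monoid M] {x : M} {m q l : ℕ}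
    (hm : x ^ m = 1) (hql : x ^ (q * l) = 1) (hq : q.Coprime m) : x ^ l = 1 := by
  have hgcd : x ^ m.gcd l = 1 := by
    rw [← hq.gcd_mul_left_cancel_right l]
    exact pow_gcd_eq_one.mpr ⟨hm, hql⟩
  exact (pow_gcd_eq_one.mp hgcd).2

theorem Nat.ModEq.pow_modEq_one_of_pow_mul_of_coprime {a k m q l : ℕ}
    (hm : a ^ m ≡ 1 [MOD k]) (hql : a ^ (q * l) ≡ 1 [MOD k]) (hq : q.Coprime m) :
    a ^ l ≡ 1 [MOD k] := by
  simp only [← ZMod.natCast_eq_natCast_iff, Nat.cast_pow, Nat.cast_one] at hm hql ⊢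
  exact pow_eq_one_of_pow_mul_eq_one_of_coprime hm hql hq

theorem Nat.coprime_sub_one_of_dvd {d n : ℕ} (hdn : d ∣ n) (hn : 0 < n) : d.Coprime (n - 1) :=
  Nat.Coprime.coprime_dvd_left hdn ((Nat.coprime_self_sub_right hn).mpr (Nat.coprime_one_right n))

theorem Nat.ModEq.pow_totient_prime_sq {a p : ℕ} (hp : p.Prime) (hcop : a.Coprime p) :
    a ^ (p * (p - 1)) ≡ 1 [MOD p ^ 2] := by
  simpa [Nat.totient_prime_pow_succ hp] using Nat.ModEq.pow_totient (hcop.pow_right 2)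

theorem stmt4_general (n a p : ℕ) (h1 : 1 < n)
    (hpsp : a ^ (n - 1) ≡ 1 [MOD n]) (hp : p.Prime) (hdvd : p ^ 2 ∣ n)
    (hcop : Nat.Coprime a p) :
    a ^ (p - 1) ≡ 1 [MOD p ^ 2] := by
  have hpn : p ∣ n := (dvd_pow_self p two_ne_zero).trans hdvd
  exact (hpsp.of_dvd hdvd).pow_modEq_one_of_pow_mul_of_coprime
    (Nat.ModEq.pow_totient_prime_sq hp hcop) (Nat.coprime_sub_one_of_dvd hpn (by omega))

theorem stmt4 (n a p : ℕ) (hodd : Odd n) (hcomp : ¬ n.Prime) (h1 : 1 < n)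
    (hpsp : a ^ (n - 1) ≡ 1 [MOD n]) (hp : p.Prime) (hdvd : p ^ 2 ∣ n)
    (hcop : Nat.Coprime a p) :
    a ^ (p - 1) ≡ 1 [MOD p ^ 2] :=
  stmt4_general n a p h1 hpsp hp hdvd hcop
end

section
/- If n is an odd composite number divisible by p² for some prime p, and n is simultaneously a pseudoprime to base 2 and to base 3, then p satisfies both 2^(p−1) ≡ 1 (mod p²) and 3^(p−1) ≡ 1 (mod p²). -/
/-! The order of `a` modulo `p²` divides both `n - 1` and `φ(p²) = p (p - 1)`; as `p ∣ n`, it is prime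
to `p`, hence divides `p - 1`. -/

namespace ZMod

theorem pow_sub_one_eq_one_of_pow_eq_one {p k m : ℕ} (hp : p.Prime) {x : ZMod (p ^ (k + 1))}
    (hx : x ^ m = 1) (hm : m.Coprime p) : x ^ (p - 1) = 1 := by
  have : NeZero (p ^ (k + 1)) := ⟨pow_ne_zero _ hp.ne_zero⟩
  have hm0 : m ≠ 0 := by
    rintro rfl
    exact hp.one_lt.ne' (Nat.coprime_zero_left p |>.mp hm)
  set u := (IsUnit.of_pow_eq_one hx hm0).unit
  have hum : orderOf u ∣ m := orderOf_dvd_of_pow_eq_one (Units.ext <| by simpa [u] using hx)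
  have hu_card : orderOf u ∣ p ^ k * (p - 1) := by
    rw [← Nat.totient_prime_pow_succ hp, ← ZMod.card_units_eq_totient]
    exact orderOf_dvd_card
  have hu_coprime : (orderOf u).Coprime (p ^ k) := (hm.pow_right k).coprime_dvd_left hum
  have hdvd : orderOf u ∣ p - 1 := hu_coprime.dvd_of_dvd_mul_left hu_card
  simpa [u] using congrArg Units.val (orderOf_dvd_iff_pow_eq_one.mp hdvd)

end ZMod

theorem Nat.ModEq.pow_sub_one_of_pow {a p k m : ℕ} (hp : p.Prime)
    (h : a ^ m ≡ 1 [MOD p ^ (k + 1)]) (hm : m.Coprime p) : a ^ (p - 1) ≡ 1 [MOD p ^ (k + 1)] := by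
  rw [← ZMod.natCast_eq_natCast_iff] at h ⊢
  push_cast at h ⊢
  exact ZMod.pow_sub_one_eq_one_of_pow_eq_one hp h hm

theorem Nat.coprime_sub_one_of_dvd_s5 {n p : ℕ} (hn : n ≠ 0) (hp : p ∣ n) : (n - 1).Coprime p :=
  ((Nat.coprime_self_sub_left (by omega)).mpr (Nat.coprime_one_left n)).coprime_dvd_right hp

theorem stmt5_general (n p : ℕ) (h1 : 1 < n)
    (hp : p.Prime) (hdvd : p ^ 2 ∣ n)
    (hpsp2 : 2 ^ (n - 1) ≡ 1 [MOD n]) (hpsp3 : 3 ^ (n - 1) ≡ 1 [MOD n]) :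
    2 ^ (p - 1) ≡ 1 [MOD p ^ 2] ∧ 3 ^ (p - 1) ≡ 1 [MOD p ^ 2] := by
  have hcop : (n - 1).Coprime p :=
    Nat.coprime_sub_one_of_dvd_s5 (by omega) ((dvd_pow_self p two_ne_zero).trans hdvd)
  exact ⟨(hpsp2.of_dvd hdvd).pow_sub_one_of_pow hp hcop,
    (hpsp3.of_dvd hdvd).pow_sub_one_of_pow hp hcop⟩

theorem stmt5 (n p : ℕ) (hodd : Odd n) (hcomp : ¬ n.Prime) (h1 : 1 < n)
    (hp : p.Prime) (hdvd : p ^ 2 ∣ n)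
    (hpsp2 : 2 ^ (n - 1) ≡ 1 [MOD n]) (hpsp3 : 3 ^ (n - 1) ≡ 1 [MOD n]) :
    2 ^ (p - 1) ≡ 1 [MOD p ^ 2] ∧ 3 ^ (p - 1) ≡ 1 [MOD p ^ 2] :=
  stmt5_general n p h1 hp hdvd hpsp2 hpsp3
end

section
/- Q₁₁ = 3825123056546413051 = 149491 · 747451 · 34233211 is a strong pseudoprime to base 2. -/
/- Since n ≡ 3 (mod 4), n - 1 = 2·d with d odd, so s = 1 and the witness is 2^d ≡ -1 (mod n),
which `reduce_mod_char` evaluates by repeated squaring. -/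
theorem stmt7 : StrongPsp 2 3825123056546413051 := by
  have hcomposite : ¬ Nat.Prime 3825123056546413051 := by
    rw [show 3825123056546413051 = 149491 * (747451 * 34233211) by norm_num]
    exact Nat.not_prime_mul (by norm_num) (by norm_num)
  have hpow : ((2 : ℕ) : ZMod 3825123056546413051) ^ (2 ^ 0 * 1912561528273206525) = -1 := by
    rw [pow_zero, one_mul, Nat.cast_ofNat]
    reduce_mod_char
  exact ⟨by decide, by norm_num, hcomposite, 1, 1912561528273206525, by decide, by norm_num,
    Or.inr ⟨0, one_pos, hpow⟩⟩
end

section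
/- Q₁₁ = 3825123056546413051 is a strong pseudoprime to each of the bases 2, 3, 5, 7, 11, 13, 17, 19, and 23. -/
theorem strongPsp_of_mod_four_eq_three {a n : ℕ} (hn : n % 4 = 3) (hnp : ¬ n.Prime)
    (h : (a : ZMod n) ^ ((n - 1) / 2) = 1 ∨ (a : ZMod n) ^ ((n - 1) / 2) = -1) :
    StrongPsp a n := by
  refine ⟨Nat.odd_iff.2 (by omega), by omega, hnp, 1, (n - 1) / 2,
    Nat.odd_iff.2 (by omega), by omega, ?_⟩
  rcases h with h | h
  · exact Or.inl h
  · exact Or.inr ⟨0, one_pos, by rwa [pow_zero, one_mul]⟩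

theorem not_prime_q11 : ¬ (3825123056546413051 : ℕ).Prime := by
  have h : (3825123056546413051 : ℕ) = 149491 * (747451 * 34233211) := by norm_num
  exact h ▸ Nat.not_prime_mul (by norm_num) (by norm_num)

theorem stmt8 : ∀ a ∈ [2, 3, 5, 7, 11, 13, 17, 19, 23],
    StrongPsp a 3825123056546413051 := by
  intro a ha
  refine strongPsp_of_mod_four_eq_three (by norm_num) not_prime_q11 ?_
  -- `reduce_mod_char` evaluates the power by repeated squaring, never forming `a ^ d` itself.
  fin_cases ha <;> first
    | (left; reduce_mod_char; done)
    | (right; reduce_mod_char)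
end

section
/- Suppose n = p·q·r is a product of three distinct primes and n is a pseudoprime to bases 2, 3, 5, 7, 11, 13, 17, 19, 23. Let λ = lcm(λ_p, λ_q) where λ_p, λ_q are the lcms of the orders of these nine bases modulo p and q respectively. Then r ≡ (pq)^(−1) (mod λ), provided gcd(pq, λ) = 1. -/
/-! Since `p ∣ n` and `q ∣ n`, the order of each base modulo `p` or `q` divides `n - 1`, hence so
does `λ`; thus `r * (p * q) = n ≡ 1 (mod λ)`. -/

theorem Nat.foldr_lcm_dvd_iff {l : List ℕ} {k : ℕ} :
    l.foldr Nat.lcm 1 ∣ k ↔ ∀ x ∈ l, x ∣ k := by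
  induction l with
  | nil => simp
  | cons x l ih => simp [Nat.lcm_dvd_iff, ih]

theorem ZMod.orderOf_natCast_dvd_of_pow_modEq_one {a k m s : ℕ} (hs : s ∣ m)
    (h : a ^ k ≡ 1 [MOD m]) : orderOf (a : ZMod s) ∣ k := by
  rw [orderOf_dvd_iff_pow_eq_one, ← Nat.cast_pow, ← Nat.cast_one, ZMod.natCast_eq_natCast_iff]
  exact h.of_dvd hs

theorem foldr_lcm_orderOf_dvd_of_pow_modEq_one {l : List ℕ} {k m s : ℕ} (hs : s ∣ m)
    (h : ∀ a ∈ l, a ^ k ≡ 1 [MOD m]) :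
    (l.map fun a : ℕ => orderOf (a : ZMod s)).foldr Nat.lcm 1 ∣ k := by
  rw [Nat.foldr_lcm_dvd_iff, List.forall_mem_map]
  exact fun a ha => ZMod.orderOf_natCast_dvd_of_pow_modEq_one hs (h a ha)

theorem stmt15_general (n p q r lam : ℕ) (hp : p.Prime) (hq : q.Prime) (hr : r.Prime)
    (hn : n = p * q * r)
    (hpsp : ∀ a ∈ [2, 3, 5, 7, 11, 13, 17, 19, 23],
      a ^ (n - 1) ≡ 1 [MOD n])
    (hlam : lam = Nat.lcm
      (([2, 3, 5, 7, 11, 13, 17, 19, 23].map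
        (fun a => orderOf ((a : ℕ) : ZMod p))).foldr Nat.lcm 1)
      (([2, 3, 5, 7, 11, 13, 17, 19, 23].map
        (fun a => orderOf ((a : ℕ) : ZMod q))).foldr Nat.lcm 1)) :
    r * (p * q) ≡ 1 [MOD lam] := by
  have hpn : p ∣ n := hn ▸ dvd_mul_of_dvd_left (dvd_mul_right p q) r
  have hqn : q ∣ n := hn ▸ dvd_mul_of_dvd_left (dvd_mul_left q p) r
  have hlam_dvd : lam ∣ n - 1 := hlam ▸ Nat.lcm_dvd
    (foldr_lcm_orderOf_dvd_of_pow_modEq_one hpn hpsp)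
    (foldr_lcm_orderOf_dvd_of_pow_modEq_one hqn hpsp)
  have hn_pos : 0 < n := hn ▸ Nat.mul_pos (Nat.mul_pos hp.pos hq.pos) hr.pos
  rw [show r * (p * q) = n by rw [hn]; ring]
  exact ((Nat.modEq_iff_dvd' hn_pos).mpr hlam_dvd).symm

theorem stmt15 (n p q r lam : ℕ) (hp : p.Prime) (hq : q.Prime) (hr : r.Prime)
    (hpq : p ≠ q) (hpr : p ≠ r) (hqr : q ≠ r) (hn : n = p * q * r)
    (hpsp : ∀ a ∈ [2, 3, 5, 7, 11, 13, 17, 19, 23],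
      a ^ (n - 1) ≡ 1 [MOD n])
    (hlam : lam = Nat.lcm
      (([2, 3, 5, 7, 11, 13, 17, 19, 23].map
        (fun a => orderOf ((a : ℕ) : ZMod p))).foldr Nat.lcm 1)
      (([2, 3, 5, 7, 11, 13, 17, 19, 23].map
        (fun a => orderOf ((a : ℕ) : ZMod q))).foldr Nat.lcm 1))
    (hcop : Nat.Coprime (p * q) lam) :
    r * (p * q) ≡ 1 [MOD lam] :=
  stmt15_general n p q r lam hp hq hr hn hpsp hlam
end
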